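/- Let S(n, k) denote any quantity satisfying 1 ≤ S(n, k) for all n, and suppose a penalty pen(k, n) satisfies pen(k₀+1, n) - pen(k₀, n) ≥ ((k₀(k₀+2)-1)/2 + 1 + ε/2) log n for some ε > 0. If P(k̂_n = k) ≤ exp( ((k₀(k₀+2)-1)/2) log n + d + pen(k₀,n) - pen(k,n) ) for every k with k₀ < k ≤ log n and pen is nondecreasing in k, then ∑_{n≥1} P(k̂_n ∈ (k₀, log n]) < ∞, and hence by Borel–Cantelli k̂_n ∉ (k₀, log n] eventually almost surely. -/
import Mathlib


open MeasureTheory Filter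

/-- Non-overestimation in the range `(k₀, log n]`: under the overestimation probability
bound and a penalty gap of size `((k₀(k₀+2)-1)/2 + 1 + ε/2) log n`, the series
`∑_n P(k̂_n ∈ (k₀, log n])` converges, and hence by Borel–Cantelli
`k̂_n ∉ (k₀, log n]` eventually almost surely. -/
theorem non_overestimation_small_range
    {Ω : Type*} [MeasurableSpace Ω] (μ : Measure Ω) [IsProbabilityMeasure μ]
    (khat : ℕ → Ω → ℕ) (hmeas : ∀ n, Measurable (khat n))
    (k₀ : ℕ) (hk₀ : 1 ≤ k₀) (d ε : ℝ) (hε : 0 < ε)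
    (pen : ℕ → ℕ → ℝ)
    (hmono : ∀ n, Monotone fun k => pen k n)
    (hgap : ∀ n : ℕ, 1 ≤ n →
      (((k₀ : ℝ) * (k₀ + 2) - 1)/2 + 1 + ε/2) * Real.log n ≤
        pen (k₀ + 1) n - pen k₀ n)
    (hrange : ∀ n ω, khat n ω ∈ Set.Icc 1 n)
    (hbound : ∀ n k : ℕ, k₀ < k → (k : ℝ) ≤ Real.log n →
      μ {ω | khat n ω = k} ≤
        ENNReal.ofReal (Real.exp ((((k₀ : ℝ) * (k₀ + 2) - 1)/2) * Real.log n + d +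
          pen k₀ n - pen k n))) :
    (∑' n : ℕ, μ {ω | k₀ < khat n ω ∧ (khat n ω : ℝ) ≤ Real.log n}) < ⊤ ∧
    ∀ᵐ ω ∂μ, ∀ᶠ n in atTop, ¬(k₀ < khat n ω ∧ (khat n ω : ℝ) ≤ Real.log n) := by
  set S : ℕ → Set Ω := fun n => {ω | k₀ < khat n ω ∧ (khat n ω : ℝ) ≤ Real.log n} with hS
  set A : ℝ := ((k₀ : ℝ) * (k₀ + 2) - 1)/2 with hA
  set f : ℕ → ℝ := fun n => Real.log n * Real.exp (d - (1 + ε/2) * Real.log n) with hf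
  have hlognn : ∀ n : ℕ, 0 ≤ Real.log n := by
    intro n
    rcases Nat.eq_zero_or_pos n with h | h
    · simp [h]
    · exact Real.log_nonneg (by exact_mod_cast h)
  have hf0 : ∀ n, 0 ≤ f n := fun n => mul_nonneg (hlognn n) (Real.exp_pos _).le
  have hmain : ∀ n, μ (S n) ≤ ENNReal.ofReal (f n) := by
    intro n
    set m := ⌊Real.log n⌋₊ with hm
    have hsub : S n ⊆ ⋃ k ∈ Finset.Ioc k₀ m, {ω | khat n ω = k} := by
      intro ω hω
      obtain ⟨h1, h2⟩ := hω
      have hkm : khat n ω ≤ m := Nat.le_floor h2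
      simp only [Set.mem_iUnion]
      exact ⟨khat n ω, Finset.mem_Ioc.mpr ⟨h1, hkm⟩, rfl⟩
    calc μ (S n) ≤ ∑ k ∈ Finset.Ioc k₀ m, μ {ω | khat n ω = k} :=
          (measure_mono hsub).trans (measure_biUnion_finset_le _ _)
      _ ≤ ∑ k ∈ Finset.Ioc k₀ m,
            ENNReal.ofReal (Real.exp (d - (1 + ε/2) * Real.log n)) := by
          apply Finset.sum_le_sum
          intro k hk
          obtain ⟨hk1, hk2⟩ := Finset.mem_Ioc.mp hk
          have hm1 : 0 < m := by omega
          have hlog1 : 1 ≤ Real.log n := Nat.floor_pos.mp hm1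
          have hn1 : 1 ≤ n := by
            rcases Nat.eq_zero_or_pos n with h | h
            · simp [h] at hlog1; linarith
            · exact h
          have hklog : (k : ℝ) ≤ Real.log n :=
            le_trans (by exact_mod_cast hk2) (Nat.floor_le (by linarith))
          refine (hbound n k hk1 hklog).trans (ENNReal.ofReal_le_ofReal
            (Real.exp_le_exp.mpr ?_))
          have hgap' := hgap n hn1
          have hpen : pen (k₀ + 1) n ≤ pen k n := hmono n hk1
          have hx : (A + 1 + ε/2) * Real.log n
              = A * Real.log n + (1 + ε/2) * Real.log n := by ring
          linarith
      _ ≤ ENNReal.ofReal (f n) := by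
          rw [Finset.sum_const, nsmul_eq_mul]
          have hcard : ((Finset.Ioc k₀ m).card : ℝ) ≤ Real.log n := by
            rw [Nat.card_Ioc]
            exact le_trans (by exact_mod_cast Nat.sub_le m k₀)
              (Nat.floor_le (hlognn n))
          rw [← ENNReal.ofReal_natCast, ← ENNReal.ofReal_mul (by positivity)]
          exact ENNReal.ofReal_le_ofReal
            (mul_le_mul_of_nonneg_right hcard (Real.exp_pos _).le)
  have hfs : Summable f := by
    have hg : Summable (fun n : ℕ => (4/ε) * Real.exp d * (n : ℝ) ^ (-(1 + ε/4))) :=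
      (Real.summable_nat_rpow.mpr (by linarith)).mul_left _
    refine Summable.of_nonneg_of_le hf0 (fun n => ?_) hg
    rcases Nat.eq_zero_or_pos n with h | h
    · simp [h, hf]
      positivity
    · have hn : (0 : ℝ) < n := by exact_mod_cast h
      have hlog : Real.log n ≤ (4/ε) * (n : ℝ) ^ (ε/4) := by
        have := Real.log_le_rpow_div hn.le (by positivity : (0:ℝ) < ε/4)
        calc Real.log n ≤ (n : ℝ) ^ (ε/4) / (ε/4) := this
          _ = (4/ε) * (n : ℝ) ^ (ε/4) := by field_simp
      have hsplit : (n : ℝ) ^ (-(1 + ε/4))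
          = (n : ℝ) ^ (ε/4) * (n : ℝ) ^ (-(1 + ε/2)) := by
        rw [← Real.rpow_add hn]; ring_nf
      have hexp : Real.exp (d - (1 + ε/2) * Real.log n)
          = Real.exp d * (n : ℝ) ^ (-(1 + ε/2)) := by
        rw [Real.rpow_def_of_pos hn, ← Real.exp_add]; ring_nf
      rw [hf]
      simp only
      rw [hexp, hsplit]
      have h1 : Real.log n * (Real.exp d * (n : ℝ) ^ (-(1 + ε/2)))
          ≤ (4/ε) * (n : ℝ) ^ (ε/4) * (Real.exp d * (n : ℝ) ^ (-(1 + ε/2))) :=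
        mul_le_mul_of_nonneg_right hlog (by positivity)
      calc Real.log n * (Real.exp d * (n : ℝ) ^ (-(1 + ε/2)))
          ≤ (4/ε) * (n : ℝ) ^ (ε/4) * (Real.exp d * (n : ℝ) ^ (-(1 + ε/2))) := h1
        _ = 4 / ε * Real.exp d * ((n : ℝ) ^ (ε/4) * (n : ℝ) ^ (-(1 + ε/2))) := by ring
  have hsum : (∑' n, μ (S n)) < ⊤ := by
    calc (∑' n, μ (S n)) ≤ ∑' n, ENNReal.ofReal (f n) := ENNReal.tsum_le_tsum hmain
      _ = ENNReal.ofReal (∑' n, f n) := (ENNReal.ofReal_tsum_of_nonneg hf0 hfs).symm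
      _ < ⊤ := ENNReal.ofReal_lt_top
  exact ⟨hsum, ae_eventually_notMem hsum.ne⟩
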